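/- arXiv:1303.2185 — 10 statements merged into one kernel-verified Lean document; each statement's English description precedes it below -/
import Mathlib

section
/- Let g, ψ : ℝ → ℝ be continuously differentiable functions, and suppose on an interval I we have (ψ(x))² + (ψ'(x))² < (g(x))² + (g'(x))² for all x ∈ I, and g' does not change sign on I (either g'(x) ≥ 0 for all x ∈ I, or g'(x) ≤ 0 for all x ∈ I). Then g + ψ has at most one zero on I. -/
/-!
At a zero `x` of `f = g + ψ` we have `ψ x ^ 2 = g x ^ 2`, so the energy inequality gives
`|ψ' x| < |g' x|`; as `g'` has constant sign, `f'` has that same strict sign at every zero of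
`f` in `I`. A differentiable function crossing zero only upwards cannot vanish twice: between two
zeros `a < b` it stays nonnegative (it can only leave a zero upwards), yet it is negative just to
the left of `b`.
-/

open Set Filter Topology

namespace HasDerivAt

variable {f : ℝ → ℝ} {f' z : ℝ}

theorem eventually_pos_nhdsGT_of_deriv_pos (hf : HasDerivAt f f' z) (hz : f z = 0)
    (hf' : 0 < f') : ∀ᶠ x in 𝓝[>] z, 0 < f x := by
  filter_upwards [(hasDerivAt_iff_tendsto_slope_left_right.1 hf).2.eventually
    (eventually_gt_nhds hf'), self_mem_nhdsWithin] with x hslope hx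
  rw [slope_def_field, hz, sub_zero] at hslope
  exact (div_pos_iff_of_pos_right (sub_pos.2 hx)).1 hslope

theorem eventually_neg_nhdsLT_of_deriv_pos (hf : HasDerivAt f f' z) (hz : f z = 0)
    (hf' : 0 < f') : ∀ᶠ x in 𝓝[<] z, f x < 0 := by
  filter_upwards [(hasDerivAt_iff_tendsto_slope_left_right.1 hf).1.eventually
    (eventually_gt_nhds hf'), self_mem_nhdsWithin] with x hslope hx
  rw [slope_def_field, hz, sub_zero] at hslope
  exact not_le.1 fun h => hslope.not_ge (div_nonpos_of_nonneg_of_nonpos h (sub_neg.2 hx).le)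

end HasDerivAt

theorem ContinuousOn.nonneg_Icc_of_eventually_pos {f : ℝ → ℝ} {a b : ℝ}
    (hf : ContinuousOn f (Icc a b)) (ha : 0 ≤ f a)
    (hzero : ∀ x ∈ Ico a b, f x = 0 → ∀ᶠ y in 𝓝[>] x, 0 < f y) :
    ∀ x ∈ Icc a b, 0 ≤ f x := by
  have hclosed : IsClosed ({x | 0 ≤ f x} ∩ Icc a b) := by
    rw [inter_comm]; exact hf.preimage_isClosed_of_isClosed isClosed_Icc isClosed_Ici
  refine fun x hx => hclosed.Icc_subset_of_forall_mem_nhdsWithin ha ?_ hx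
  rintro x ⟨hfx, hxab⟩
  rcases (show (0 : ℝ) ≤ f x from hfx).eq_or_lt with hx0 | hx0
  · exact (hzero x hxab hx0.symm).mono fun y hy => hy.le
  · have hcont : Tendsto f (𝓝[>] x) (𝓝 (f x)) := by
      rw [← nhdsWithin_Ioc_eq_nhdsGT hxab.2]
      exact (hf x (Ico_subset_Icc_self hxab)).mono_left
        (nhdsWithin_mono _ (Ioc_subset_Icc_self.trans (Icc_subset_Icc_left hxab.1)))
    exact (hcont.eventually (eventually_gt_nhds hx0)).mono fun y hy => hy.le

namespace Set.OrdConnected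

variable {I : Set ℝ} {f f' : ℝ → ℝ}

theorem subsingleton_zeros_of_deriv_pos (hI : I.OrdConnected)
    (hf : ∀ x ∈ I, HasDerivAt f (f' x) x) (hpos : ∀ x ∈ I, f x = 0 → 0 < f' x) :
    {x ∈ I | f x = 0}.Subsingleton := by
  suffices h : ∀ a ∈ {x ∈ I | f x = 0}, ∀ b ∈ {x ∈ I | f x = 0}, ¬a < b from
    fun a ha b hb => le_antisymm (not_lt.1 (h b hb a ha)) (not_lt.1 (h a ha b hb))
  rintro a ⟨haI, hfa⟩ b ⟨hbI, hfb⟩ hab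
  have hsub : Icc a b ⊆ I := hI.out haI hbI
  have hnonneg : ∀ x ∈ Icc a b, 0 ≤ f x :=
    ContinuousOn.nonneg_Icc_of_eventually_pos
      (fun x hx => (hf x (hsub hx)).continuousAt.continuousWithinAt) hfa.ge
      fun x hx hx0 => (hf x (hsub (Ico_subset_Icc_self hx))).eventually_pos_nhdsGT_of_deriv_pos
        hx0 (hpos x (hsub (Ico_subset_Icc_self hx)) hx0)
  obtain ⟨x, hfx, hx⟩ := (((hf b hbI).eventually_neg_nhdsLT_of_deriv_pos hfb
    (hpos b hbI hfb)).and (Ioo_mem_nhdsLT hab)).exists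
  exact hfx.not_ge (hnonneg x (Ioo_subset_Icc_self hx))

theorem subsingleton_zeros_of_deriv_neg (hI : I.OrdConnected)
    (hf : ∀ x ∈ I, HasDerivAt f (f' x) x) (hneg : ∀ x ∈ I, f x = 0 → f' x < 0) :
    {x ∈ I | f x = 0}.Subsingleton := by
  simpa using hI.subsingleton_zeros_of_deriv_pos (f := -f) (f' := -f')
    (fun x hx => (hf x hx).neg) fun x hx hx0 => neg_pos.2 (hneg x hx (neg_eq_zero.1 hx0))

end Set.OrdConnected

theorem stmt_0_general (g ψ g' ψ' : ℝ → ℝ) (I : Set ℝ) (hI : I.OrdConnected)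
    (hg : ∀ x, HasDerivAt g (g' x) x) (hψ : ∀ x, HasDerivAt ψ (ψ' x) x)
    (hE : ∀ x ∈ I, (ψ x) ^ 2 + (ψ' x) ^ 2 < (g x) ^ 2 + (g' x) ^ 2)
    (hsign : (∀ x ∈ I, 0 ≤ g' x) ∨ (∀ x ∈ I, g' x ≤ 0)) :
    {x ∈ I | g x + ψ x = 0}.Subsingleton := by
  have hderiv : ∀ x ∈ I, HasDerivAt (fun y => g y + ψ y) (g' x + ψ' x) x :=
    fun x _ => (hg x).add (hψ x)
  have habs : ∀ x ∈ I, g x + ψ x = 0 → |ψ' x| < |g' x| := by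
    intro x hx h0
    have hψx : ψ x = -g x := eq_neg_of_add_eq_zero_right h0
    have := hE x hx
    rw [hψx, neg_sq] at this
    exact sq_lt_sq.1 (by linarith)
  rcases hsign with hs | hs
  · refine hI.subsingleton_zeros_of_deriv_pos hderiv fun x hx h0 => ?_
    have := habs x hx h0
    rw [abs_of_nonneg (hs x hx)] at this
    linarith [neg_abs_le (ψ' x)]
  · refine hI.subsingleton_zeros_of_deriv_neg hderiv fun x hx h0 => ?_
    have := habs x hx h0
    rw [abs_of_nonpos (hs x hx)] at this
    linarith [le_abs_self (ψ' x)]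

theorem stmt_0 (g ψ g' ψ' : ℝ → ℝ) (I : Set ℝ) (hI : I.OrdConnected)
    (hg : ∀ x, HasDerivAt g (g' x) x) (hψ : ∀ x, HasDerivAt ψ (ψ' x) x)
    (hg' : Continuous g') (hψ' : Continuous ψ')
    (hE : ∀ x ∈ I, (ψ x) ^ 2 + (ψ' x) ^ 2 < (g x) ^ 2 + (g' x) ^ 2)
    (hsign : (∀ x ∈ I, 0 ≤ g' x) ∨ (∀ x ∈ I, g' x ≤ 0)) :
    {x ∈ I | g x + ψ x = 0}.Subsingleton :=
  stmt_0_general g ψ g' ψ' I hI hg hψ hE hsign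
end

section
/- Let g, ψ : ℝ → ℝ be continuously differentiable, and let I = [s,t] be a closed interval with g'(s) = 0 = g'(t) and g'(x) ≠ 0 for all x ∈ (s,t). Suppose ψ(x)² + ψ'(x)² < g(x)² + g'(x)² for all x ∈ I. Then g + ψ and g have the same number of zeros on I, and neither g nor g + ψ vanishes at the endpoints s or t. -/
/-!
At the endpoints `g' = 0`, so the energy inequality reads `ψ ^ 2 + ψ' ^ 2 < g ^ 2`: there
`|ψ| < |g|`, hence neither `g` nor `g + ψ` vanishes and both have the same sign. On `(s, t)` the
continuous `g'` does not vanish, so it has a constant sign `σ`; at a zero of `g + ψ` we have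
`ψ = -g`, so the energy inequality gives `|ψ'| < |g'|` and `(g + ψ)'` has sign `σ` as well.
A differentiable function all of whose zeros in `(s, t)` are crossed with derivative of one fixed
sign has at most one zero, and has one exactly when its signs at `s` and `t` differ. So both zero
counts are `1` or `0` according as `sign (g s) ≠ sign (g t)` or not.
-/

open Set Topology SignType

section IntermediateValue

variable {f : ℝ → ℝ}

theorem exists_mem_uIcc_eq_zero_of_sign_ne {u v : ℝ} (hf : ContinuousOn f (uIcc u v))
    (h : sign (f u) ≠ sign (f v)) : ∃ y ∈ uIcc u v, f y = 0 := by
  refine intermediate_value_uIcc hf ?_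
  rcases lt_trichotomy (f u) 0 with hu | hu | hu <;>
    rcases lt_trichotomy (f v) 0 with hv | hv | hv <;>
    simp_all [mem_uIcc, sign_pos, sign_neg, le_of_lt]

theorem exists_sign_eq_of_ne_zero {S : Set ℝ} (hf : ContinuousOn f S) (hS : S.OrdConnected)
    (h0 : ∀ x ∈ S, f x ≠ 0) :
    ∃ σ : SignType, σ ≠ 0 ∧ ∀ x ∈ S, sign (f x) = σ := by
  rcases S.eq_empty_or_nonempty with rfl | ⟨x₀, hx₀⟩
  · exact ⟨1, one_ne_zero, by simp⟩
  refine ⟨sign (f x₀), by simpa using h0 x₀ hx₀, fun x hx => ?_⟩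
  by_contra hne
  obtain ⟨y, hy, hfy⟩ :=
    exists_mem_uIcc_eq_zero_of_sign_ne (hf.mono (hS.uIcc_subset hx hx₀)) hne
  exact h0 y (hS.uIcc_subset hx hx₀ hy) hfy

end IntermediateValue

theorem HasDerivAt.eventually_sign_eq {f : ℝ → ℝ} {f' c : ℝ} (h : HasDerivAt f f' c)
    (hf' : f' ≠ 0) (hc : f c = 0) : ∀ᶠ x in 𝓝 c, sign (f x) = sign f' * sign (x - c) := by
  rcases hf'.lt_or_gt with hneg | hpos
  · filter_upwards [eventually_nhdsWithin_sign_eq_of_deriv_neg (h.deriv ▸ hneg) hc] with x hx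
    rw [hx, sign_neg hneg, ← neg_sub, Left.sign_neg, neg_one_mul]
  · filter_upwards [eventually_nhdsWithin_sign_eq_of_deriv_pos (h.deriv ▸ hpos) hc] with x hx
    rw [hx, sign_pos hpos, one_mul]

theorem HasDerivAt.exists_sign_eq_neg_left {f : ℝ → ℝ} {f' a c : ℝ} (h : HasDerivAt f f' c)
    (hf' : f' ≠ 0) (hc : f c = 0) (hac : a < c) : ∃ x ∈ Ioo a c, sign (f x) = -sign f' := by
  obtain ⟨x, hx, hxI⟩ :=
    (((h.eventually_sign_eq hf' hc).filter_mono nhdsWithin_le_nhds).and (Ioo_mem_nhdsLT hac)).exists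
  refine ⟨x, hxI, ?_⟩
  rw [hx, sign_neg (sub_neg.2 hxI.2), mul_neg_one]

theorem HasDerivAt.exists_sign_eq_right {f : ℝ → ℝ} {f' b c : ℝ} (h : HasDerivAt f f' c)
    (hf' : f' ≠ 0) (hc : f c = 0) (hcb : c < b) : ∃ x ∈ Ioo c b, sign (f x) = sign f' := by
  obtain ⟨x, hx, hxI⟩ :=
    (((h.eventually_sign_eq hf' hc).filter_mono nhdsWithin_le_nhds).and (Ioo_mem_nhdsGT hcb)).exists
  refine ⟨x, hxI, ?_⟩
  rw [hx, sign_pos (sub_pos.2 hxI.1), mul_one]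

theorem SignType.neg_ne_self {σ : SignType} (hσ : σ ≠ 0) : -σ ≠ σ := by
  cases σ <;> simp_all

section TransversalZeros

variable {f f' : ℝ → ℝ} {s t : ℝ} {σ : SignType}

theorem subsingleton_zeros_Ioo (hf : ∀ x, HasDerivAt f (f' x) x) (hσ : σ ≠ 0)
    (hz : ∀ x ∈ Ioo s t, f x = 0 → sign (f' x) = σ) :
    {x ∈ Ioo s t | f x = 0}.Subsingleton := by
  have hcont : Continuous f := continuous_iff_continuousAt.2 fun x => (hf x).continuousAt
  have hf'0 : ∀ x ∈ Ioo s t, f x = 0 → f' x ≠ 0 := fun x hx hfx => by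
    rwa [← sign_ne_zero, hz x hx hfx]
  rintro a ⟨ha, hfa⟩ b ⟨hb, hfb⟩
  by_contra hab
  wlog hlt : a < b generalizing a b
  · exact this hb hfb ha hfa (Ne.symm hab) ((lt_or_gt_of_ne hab).resolve_left hlt)
  obtain ⟨a', ha', hfa'⟩ := (hf a).exists_sign_eq_right (hf'0 a ha hfa) hfa hlt
  rw [hz a ha hfa] at hfa'
  -- `f` has sign `σ` at `a'` and `-σ` just before the first zero `c` after `a'`: an earlier zero.
  set Z := Icc a' b ∩ f ⁻¹' {0}
  have hZ : IsClosed Z := isClosed_Icc.inter (isClosed_singleton.preimage hcont)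
  have hbZ : b ∈ Z := ⟨⟨ha'.2.le, le_rfl⟩, hfb⟩
  have hcZ : sInf Z ∈ Z := hZ.csInf_mem ⟨b, hbZ⟩ (bddBelow_Icc.mono inter_subset_left)
  set c := sInf Z
  have hfc : f c = 0 := hcZ.2
  have hac : a' < c := hcZ.1.1.lt_of_ne fun h => by
    rw [h, hfc, sign_zero] at hfa'
    exact hσ hfa'.symm
  have hc : c ∈ Ioo s t := ⟨ha.1.trans (ha'.1.trans hac), hcZ.1.2.trans_lt hb.2⟩
  obtain ⟨x, hx, hfx⟩ := (hf c).exists_sign_eq_neg_left (hf'0 c hc hfc) hfc hac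
  rw [hz c hc hfc] at hfx
  obtain ⟨y, hy, hfy⟩ := exists_mem_uIcc_eq_zero_of_sign_ne (u := a') (v := x)
    hcont.continuousOn (by rw [hfa', hfx]; exact (SignType.neg_ne_self hσ).symm)
  rw [uIcc_of_le hx.1.le] at hy
  have hyZ : y ∈ Z := ⟨⟨hy.1, hy.2.trans (hx.2.le.trans hcZ.1.2)⟩, hfy⟩
  exact not_lt.2 (csInf_le (bddBelow_Icc.mono inter_subset_left) hyZ) (hy.2.trans_lt hx.2)

theorem ncard_zeros_Icc (hf : ∀ x, HasDerivAt f (f' x) x) (hσ : σ ≠ 0)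
    (hz : ∀ x ∈ Ioo s t, f x = 0 → sign (f' x) = σ)
    (hst : s ≤ t) (hs : f s ≠ 0) (ht : f t ≠ 0) :
    {x ∈ Icc s t | f x = 0}.ncard = if sign (f s) = sign (f t) then 0 else 1 := by
  have hcont : Continuous f := continuous_iff_continuousAt.2 fun x => (hf x).continuousAt
  have hIoo : ∀ x ∈ Icc s t, f x = 0 → x ∈ Ioo s t := fun x hx hfx =>
    ⟨hx.1.lt_of_ne (by rintro rfl; exact hs hfx), hx.2.lt_of_ne (by rintro rfl; exact ht hfx)⟩
  have hsub : {x ∈ Icc s t | f x = 0}.Subsingleton := fun x hx y hy =>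
    subsingleton_zeros_Ioo hf hσ hz ⟨hIoo x hx.1 hx.2, hx.2⟩ ⟨hIoo y hy.1 hy.2, hy.2⟩
  split_ifs with hsign
  · suffices {x ∈ Icc s t | f x = 0} = ∅ by rw [this, ncard_empty]
    refine eq_empty_iff_forall_notMem.2 fun c ⟨hc, hfc⟩ => ?_
    have hc' := hIoo c hc hfc
    have hf'c : f' c ≠ 0 := by rwa [← sign_ne_zero, hz c hc' hfc]
    obtain ⟨x, hx, hfx⟩ := (hf c).exists_sign_eq_neg_left hf'c hfc hc'.1
    obtain ⟨y, hy, hfy⟩ := (hf c).exists_sign_eq_right hf'c hfc hc'.2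
    rw [hz c hc' hfc] at hfx hfy
    -- `f` changes sign on `[s, x]` or on `[y, t]`, giving a second zero.
    have : sign (f s) ≠ sign (f x) ∨ sign (f y) ≠ sign (f t) := by
      by_contra! h
      exact SignType.neg_ne_self hσ (by rw [← hfx, ← hfy, ← h.1, hsign, h.2])
    rcases this with h | h
    · obtain ⟨z, hz', hfz⟩ := exists_mem_uIcc_eq_zero_of_sign_ne hcont.continuousOn h
      rw [uIcc_of_le hx.1.le] at hz'
      have := hsub ⟨⟨hz'.1, hz'.2.trans (hx.2.trans hc'.2).le⟩, hfz⟩ ⟨hc, hfc⟩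
      exact (hz'.2.trans_lt hx.2).ne this
    · obtain ⟨z, hz', hfz⟩ := exists_mem_uIcc_eq_zero_of_sign_ne hcont.continuousOn h
      rw [uIcc_of_le hy.2.le] at hz'
      have := hsub ⟨⟨(hc'.1.trans hy.1).le.trans hz'.1, hz'.2⟩, hfz⟩ ⟨hc, hfc⟩
      exact (hy.1.trans_le hz'.1).ne' this
  · obtain ⟨c, hc, hfc⟩ := exists_mem_uIcc_eq_zero_of_sign_ne hcont.continuousOn hsign
    rw [uIcc_of_le hst] at hc
    rw [hsub.eq_singleton_of_mem ⟨hc, hfc⟩, ncard_singleton]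

end TransversalZeros

theorem sign_add_eq_of_sq_lt_sq {a b : ℝ} (h : b ^ 2 < a ^ 2) : sign (a + b) = sign a := by
  have hpos : 0 < a * (a + b) := by nlinarith [sq_nonneg (a + b)]
  rcases mul_pos_iff.1 hpos with ⟨ha, hab⟩ | ⟨ha, hab⟩
  · rw [sign_pos ha, sign_pos hab]
  · rw [sign_neg ha, sign_neg hab]

theorem stmt_1_general (g ψ g' ψ' : ℝ → ℝ) (s t : ℝ) (hst : s ≤ t)
    (hg : ∀ x, HasDerivAt g (g' x) x) (hψ : ∀ x, HasDerivAt ψ (ψ' x) x)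
    (hg' : Continuous g')
    (hgs : g' s = 0) (hgt : g' t = 0)
    (hg'ne : ∀ x ∈ Ioo s t, g' x ≠ 0)
    (hE : ∀ x ∈ Icc s t, (ψ x) ^ 2 + (ψ' x) ^ 2 < (g x) ^ 2 + (g' x) ^ 2) :
    {x ∈ Icc s t | g x + ψ x = 0}.ncard = {x ∈ Icc s t | g x = 0}.ncard ∧
      g s ≠ 0 ∧ g t ≠ 0 ∧ g s + ψ s ≠ 0 ∧ g t + ψ t ≠ 0 := by
  have hEs : ψ s ^ 2 < g s ^ 2 := by
    nlinarith [hE s (left_mem_Icc.2 hst), hgs, sq_nonneg (ψ' s)]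
  have hEt : ψ t ^ 2 < g t ^ 2 := by
    nlinarith [hE t (right_mem_Icc.2 hst), hgt, sq_nonneg (ψ' t)]
  have hs := sign_add_eq_of_sq_lt_sq hEs
  have ht := sign_add_eq_of_sq_lt_sq hEt
  have hgs0 : g s ≠ 0 := fun h => by nlinarith [sq_nonneg (ψ s)]
  have hgt0 : g t ≠ 0 := fun h => by nlinarith [sq_nonneg (ψ t)]
  have hgψs0 : g s + ψ s ≠ 0 := by rwa [← sign_ne_zero, hs, sign_ne_zero]
  have hgψt0 : g t + ψ t ≠ 0 := by rwa [← sign_ne_zero, ht, sign_ne_zero]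
  obtain ⟨σ, hσ, hg'σ⟩ := exists_sign_eq_of_ne_zero hg'.continuousOn ordConnected_Ioo hg'ne
  have hcross : ∀ x ∈ Ioo s t, g x + ψ x = 0 → sign (g' x + ψ' x) = σ := by
    intro x hx hx0
    have hEx := hE x (Ioo_subset_Icc_self hx)
    rw [eq_neg_of_add_eq_zero_right hx0, neg_sq] at hEx
    rw [sign_add_eq_of_sq_lt_sq (by linarith), hg'σ x hx]
  refine ⟨?_, hgs0, hgt0, hgψs0, hgψt0⟩
  rw [ncard_zeros_Icc (f := fun x => g x + ψ x) (fun x => (hg x).add (hψ x)) hσ hcross hst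
      hgψs0 hgψt0,
    ncard_zeros_Icc hg hσ (fun x hx _ => hg'σ x hx) hst hgs0 hgt0, hs, ht]

theorem stmt_1 (g ψ g' ψ' : ℝ → ℝ) (s t : ℝ) (hst : s ≤ t)
    (hg : ∀ x, HasDerivAt g (g' x) x) (hψ : ∀ x, HasDerivAt ψ (ψ' x) x)
    (hg' : Continuous g') (hψ' : Continuous ψ')
    (hgs : g' s = 0) (hgt : g' t = 0)
    (hg'ne : ∀ x ∈ Ioo s t, g' x ≠ 0)
    (hE : ∀ x ∈ Icc s t, (ψ x) ^ 2 + (ψ' x) ^ 2 < (g x) ^ 2 + (g' x) ^ 2) :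
    {x ∈ Icc s t | g x + ψ x = 0}.ncard = {x ∈ Icc s t | g x = 0}.ncard ∧
      g s ≠ 0 ∧ g t ≠ 0 ∧ g s + ψ s ≠ 0 ∧ g t + ψ t ≠ 0 :=
  stmt_1_general g ψ g' ψ' s t hst hg hψ hg' hgs hgt hg'ne hE
end

section
/- Let 0 ≤ α < 1 and β ≥ 0 with αβ < 1, and let φ ∈ C¹(ℝ) satisfy φ(x) → 0 and φ'(x) → 0 as x → ∞. Then there exists N ∈ ℕ such that for every integer n ≥ N, the function f(x) = cos(x) + α cos(βx) + φ(x) has exactly one zero in the interval [nπ, (n+1)π], and this zero does not occur at an endpoint of the interval. -/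
/-! Write `ψ = α cos(β ·) + φ`. Once `|φ|, |φ'| ≤ ε` with `α, αβ ≤ 1 - 2ε`, we get
`ψ² + ψ'² < 1`. On `[nπ, (n+1)π]` the function `cos + ψ` then takes opposite signs at the
endpoints, and at a zero `z` the relation `cos z = -ψ z` forces `|sin z| > |ψ' z|`, so the
derivative `-sin z + ψ' z` has the sign of `-sin z`, which is constant on the interval. A
continuous function whose derivative has one fixed strict sign at all of its zeros vanishes at
most once. -/

open Set Real Filter Topology

section ZerosOfNegativeDerivative

variable {g : ℝ → ℝ} {a b x₀ : ℝ}

lemma eventually_pos_nhdsLT_of_deriv_neg (hd : deriv g x₀ < 0) (h0 : g x₀ = 0) :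
    ∀ᶠ x in 𝓝[<] x₀, 0 < g x := by
  filter_upwards [nhdsWithin_le_nhds (eventually_nhdsWithin_sign_eq_of_deriv_neg hd h0),
    self_mem_nhdsWithin] with x hsign (hx : x < x₀)
  rwa [_root_.sign_pos (sub_pos.2 hx), sign_eq_one_iff] at hsign

lemma eventually_neg_nhdsGT_of_deriv_neg (hd : deriv g x₀ < 0) (h0 : g x₀ = 0) :
    ∀ᶠ x in 𝓝[>] x₀, g x < 0 := by
  filter_upwards [nhdsWithin_le_nhds (eventually_nhdsWithin_sign_eq_of_deriv_neg hd h0),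
    self_mem_nhdsWithin] with x hsign (hx : x₀ < x)
  rwa [_root_.sign_neg (sub_neg.2 hx), sign_eq_neg_one_iff] at hsign

/-- Between two zeros, take a point `y` where `g > 0` (just left of the right zero) and the
last zero `w` before `y`: then `g > 0` just right of `w`, against `deriv g w < 0`. -/
lemma subsingleton_zeros_of_deriv_neg (hg : ContinuousOn g (Icc a b))
    (hd : ∀ z ∈ Icc a b, g z = 0 → deriv g z < 0) :
    {x ∈ Icc a b | g x = 0}.Subsingleton := by
  rintro x₁ ⟨hx₁, hg₁⟩ x₂ ⟨hx₂, hg₂⟩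
  by_contra hne
  wlog hlt : x₁ < x₂ generalizing x₁ x₂
  · exact this hx₂ hg₂ hx₁ hg₁ (Ne.symm hne) ((not_lt.1 hlt).lt_of_ne' hne)
  obtain ⟨y, hgy, hy⟩ := ((eventually_pos_nhdsLT_of_deriv_neg (hd x₂ hx₂ hg₂) hg₂).and
    (Ioo_mem_nhdsLT hlt)).exists
  have hsub : Icc x₁ y ⊆ Icc a b := Icc_subset_Icc hx₁.1 (hy.2.le.trans hx₂.2)
  obtain ⟨w, ⟨hwI, hgw⟩, hwmax⟩ : ∃ w, IsGreatest {t ∈ Icc x₁ y | g t = 0} w :=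
    (isCompact_Icc.of_isClosed_subset ((hg.mono hsub).preimage_isClosed_of_isClosed
      isClosed_Icc isClosed_singleton) fun _ ht ↦ ht.1).exists_isGreatest
      ⟨x₁, ⟨le_rfl, hy.1.le⟩, hg₁⟩
  have hpos : ∀ t ∈ Ioc w y, 0 < g t := by
    intro t ht
    by_contra! hgt
    obtain ⟨z, hz, hgz⟩ := intermediate_value_Icc ht.2
      ((hg.mono hsub).mono (Icc_subset_Icc (hwI.1.trans ht.1.le) le_rfl)) ⟨hgt, hgy.le⟩
    have : z ≤ w := hwmax ⟨⟨hwI.1.trans (ht.1.le.trans hz.1), hz.2⟩, hgz⟩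
    linarith [ht.1, hz.1]
  have hwy : w < y := hwI.2.lt_of_ne fun h ↦ by rw [h] at hgw; linarith
  obtain ⟨t, hgt, ht⟩ := ((eventually_neg_nhdsGT_of_deriv_neg (hd w (hsub hwI) hgw) hgw).and
    (Ioc_mem_nhdsGT hwy)).exists
  linarith [hpos t ht]

lemma exists_unique_zero_of_deriv_neg (hab : a ≤ b) (hg : ContinuousOn g (Icc a b))
    (ha : 0 < g a) (hb : g b < 0) (hd : ∀ z ∈ Icc a b, g z = 0 → deriv g z < 0) :
    ∃ x ∈ Ioo a b, g x = 0 ∧ ∀ y ∈ Icc a b, g y = 0 → y = x := by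
  obtain ⟨x, hx, hgx⟩ := intermediate_value_Ioo' hab hg ⟨hb, ha⟩
  exact ⟨x, hx, hgx, fun y hy hgy ↦
    subsingleton_zeros_of_deriv_neg hg hd ⟨hy, hgy⟩ ⟨Ioo_subset_Icc_self hx, hgx⟩⟩

end ZerosOfNegativeDerivative

lemma sq_add_sq_lt_one_of_abs_le {p q c u e₁ e₂ ε : ℝ} (hp : 0 ≤ p) (hq : 0 ≤ q)
    (hpε : p ≤ 1 - 2 * ε) (hqε : q ≤ 1 - 2 * ε) (hε : 0 < ε) (hcu : c ^ 2 + u ^ 2 = 1)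
    (he₁ : |e₁| ≤ ε) (he₂ : |e₂| ≤ ε) :
    (p * c + e₁) ^ 2 + (q * u + e₂) ^ 2 < 1 := by
  have hc : |c| ≤ 1 := abs_le_one_iff_mul_self_le_one.2 (by nlinarith [sq_nonneg u])
  have hu : |u| ≤ 1 := abs_le_one_iff_mul_self_le_one.2 (by nlinarith [sq_nonneg c])
  have h₁ : |p * c + e₁| ≤ (1 - 2 * ε) * |c| + ε :=
    (abs_add_le _ _).trans (add_le_add (by rw [abs_mul, abs_of_nonneg hp]; gcongr) he₁)
  have h₂ : |q * u + e₂| ≤ (1 - 2 * ε) * |u| + ε :=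
    (abs_add_le _ _).trans (add_le_add (by rw [abs_mul, abs_of_nonneg hq]; gcongr) he₂)
  have hcu' : |c| ^ 2 + |u| ^ 2 = 1 := by rwa [sq_abs, sq_abs]
  have hε₁ : 0 ≤ 1 - 2 * ε := hp.trans hpε
  calc (p * c + e₁) ^ 2 + (q * u + e₂) ^ 2
      ≤ ((1 - 2 * ε) * |c| + ε) ^ 2 + ((1 - 2 * ε) * |u| + ε) ^ 2 := by
        rw [← sq_abs (p * c + e₁), ← sq_abs (q * u + e₂)]
        gcongr
    _ = 1 - 2 * ε ^ 2 - 2 * ε * (1 - 2 * ε) * (2 - |c| - |u|) := by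
        linear_combination (1 - 2 * ε) ^ 2 * hcu'
    _ < 1 := by nlinarith [mul_nonneg (mul_nonneg hε.le hε₁) (by linarith : 0 ≤ 2 - |c| - |u|)]

lemma abs_lt_abs_sin_of_cos_add_eq_zero {z v w : ℝ} (hz : cos z + v = 0)
    (hvw : v ^ 2 + w ^ 2 < 1) : |w| < |sin z| := by
  have hpyth := sin_sq_add_cos_sq z
  rw [eq_neg_of_add_eq_zero_left hz, neg_sq] at hpyth
  rw [← sq_lt_sq]
  linarith

theorem exists_unique_zero_cos_add_of_sq_add_sq_lt_one {ψ ψ' : ℝ → ℝ} (n : ℕ)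
    (hψ : ∀ x ∈ Icc (n * π) ((n + 1 : ℝ) * π), HasDerivAt ψ (ψ' x) x)
    (hsmall : ∀ x ∈ Icc (n * π) ((n + 1 : ℝ) * π), ψ x ^ 2 + ψ' x ^ 2 < 1) :
    ∃ x ∈ Ioo (n * π) ((n + 1 : ℝ) * π), cos x + ψ x = 0 ∧
      ∀ y ∈ Icc (n * π) ((n + 1 : ℝ) * π), cos y + ψ y = 0 → y = x := by
  set s : ℝ := (-1) ^ n
  have hs : s * s = 1 := by rw [← mul_pow]; norm_num
  have hs_abs : |s| = 1 := abs_neg_one_pow n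
  have hs0 : s ≠ 0 := left_ne_zero_of_mul_eq_one hs
  have hlen : (n : ℝ) * π ≤ (n + 1) * π := by nlinarith [pi_pos]
  have habs : ∀ x ∈ Icc (n * π) ((n + 1 : ℝ) * π), |s * ψ x| < 1 := fun x hx ↦ by
    rw [abs_mul, hs_abs, one_mul, ← sq_lt_one_iff_abs_lt_one]
    nlinarith [hsmall x hx, sq_nonneg (ψ' x)]
  have hg : ∀ x ∈ Icc (n * π) ((n + 1 : ℝ) * π),
      HasDerivAt (fun x ↦ s * (cos x + ψ x)) (s * (-sin x + ψ' x)) x := fun x hx ↦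
    ((hasDerivAt_cos x).add (hψ x hx)).const_mul s
  have hga : 0 < s * (cos (n * π) + ψ (n * π)) := by
    have := habs _ (left_mem_Icc.2 hlen)
    rw [cos_nat_mul_pi, mul_add, hs]
    linarith [neg_abs_le (s * ψ (n * π))]
  have hgb : s * (cos ((n + 1 : ℝ) * π) + ψ ((n + 1 : ℝ) * π)) < 0 := by
    have hcos : cos ((n + 1 : ℝ) * π) = -s := by
      simpa [pow_succ] using cos_nat_mul_pi (n + 1)
    have := habs _ (right_mem_Icc.2 hlen)
    rw [hcos, mul_add, mul_neg, hs]
    linarith [le_abs_self (s * ψ ((n + 1 : ℝ) * π))]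
  have hgd : ∀ z ∈ Icc (n * π) ((n + 1 : ℝ) * π), s * (cos z + ψ z) = 0 →
      deriv (fun x ↦ s * (cos x + ψ x)) z < 0 := by
    intro z hz hgz
    rw [(hg z hz).deriv]
    have hsin : s * sin z = |sin z| := by
      rw [← abs_of_nonneg (a := s * sin z), abs_mul, hs_abs, one_mul]
      rw [← sin_sub_nat_mul_pi]
      exact sin_nonneg_of_nonneg_of_le_pi (by linarith [hz.1]) (by linarith [hz.2])
    have hψ' : s * ψ' z ≤ |ψ' z| := by simpa [abs_mul, hs_abs] using le_abs_self (s * ψ' z)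
    have := abs_lt_abs_sin_of_cos_add_eq_zero ((mul_eq_zero_iff_left hs0).1 hgz) (hsmall z hz)
    rw [mul_add, mul_neg, hsin]
    linarith
  obtain ⟨x, hx, hgx, huniq⟩ := exists_unique_zero_of_deriv_neg hlen
    (fun x hx ↦ (hg x hx).continuousAt.continuousWithinAt) hga hgb hgd
  exact ⟨x, hx, (mul_eq_zero_iff_left hs0).1 hgx, fun y hy hy0 ↦ huniq y hy (by simp [hy0])⟩

theorem stmt_2_general (α β : ℝ) (hα0 : 0 ≤ α) (hα1 : α < 1) (hβ : 0 ≤ β) (hαβ : α * β < 1)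
    (φ φ' : ℝ → ℝ) (hφ : ∀ x, HasDerivAt φ (φ' x) x)
    (hφ0 : Tendsto φ atTop (nhds 0)) (hφ'0 : Tendsto φ' atTop (nhds 0)) :
    ∃ N : ℕ, ∀ n : ℕ, N ≤ n →
      ∃ x ∈ Ioo ((n : ℝ) * π) ((n + 1 : ℝ) * π),
        (Real.cos x + α * Real.cos (β * x) + φ x = 0) ∧
        ∀ y ∈ Icc ((n : ℝ) * π) ((n + 1 : ℝ) * π),
          Real.cos y + α * Real.cos (β * y) + φ y = 0 → y = x := by
  obtain ⟨ε, hε, hαε, hαβε⟩ : ∃ ε > 0, α ≤ 1 - 2 * ε ∧ α * β ≤ 1 - 2 * ε :=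
    ⟨(1 - max α (α * β)) / 2, by linarith [max_lt hα1 hαβ],
      by linarith [le_max_left α (α * β)], by linarith [le_max_right α (α * β)]⟩
  obtain ⟨M, hM⟩ := eventually_atTop.1 <| (hφ0.eventually (Metric.closedBall_mem_nhds 0 hε)).and
    (hφ'0.eventually (Metric.closedBall_mem_nhds 0 hε))
  obtain ⟨N, hN⟩ := exists_nat_ge M
  refine ⟨N, fun n hn ↦ ?_⟩
  have hψ (x : ℝ) :
      HasDerivAt (fun x ↦ α * cos (β * x) + φ x) (α * β * -sin (β * x) + φ' x) x :=
    ((((hasDerivAt_id' x).const_mul β).cos.const_mul α).add (hφ x)).congr_deriv (by ring)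
  have hbound (x : ℝ) (hx : x ∈ Icc ((n : ℝ) * π) ((n + 1 : ℝ) * π)) :
      (α * cos (β * x) + φ x) ^ 2 + (α * β * -sin (β * x) + φ' x) ^ 2 < 1 := by
    have hMx : M ≤ x := hN.trans <| (Nat.cast_le.2 hn).trans <|
      (le_mul_of_one_le_right (Nat.cast_nonneg n) (by linarith [pi_gt_three])).trans hx.1
    obtain ⟨hφx, hφ'x⟩ := hM x hMx
    rw [Real.dist_0_eq_abs] at hφx hφ'x
    exact sq_add_sq_lt_one_of_abs_le hα0 (mul_nonneg hα0 hβ) hαε hαβε hε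
      (by rw [neg_sq]; exact cos_sq_add_sin_sq _) hφx hφ'x
  simpa only [add_assoc] using
    exists_unique_zero_cos_add_of_sq_add_sq_lt_one n (fun x _ ↦ hψ x) hbound

theorem stmt_2 (α β : ℝ) (hα0 : 0 ≤ α) (hα1 : α < 1) (hβ : 0 ≤ β) (hαβ : α * β < 1)
    (φ φ' : ℝ → ℝ) (hφ : ∀ x, HasDerivAt φ (φ' x) x) (hφ'c : Continuous φ')
    (hφ0 : Tendsto φ atTop (nhds 0)) (hφ'0 : Tendsto φ' atTop (nhds 0)) :
    ∃ N : ℕ, ∀ n : ℕ, N ≤ n →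
      ∃ x ∈ Ioo ((n : ℝ) * π) ((n + 1 : ℝ) * π),
        (Real.cos x + α * Real.cos (β * x) + φ x = 0) ∧
        ∀ y ∈ Icc ((n : ℝ) * π) ((n + 1 : ℝ) * π),
          Real.cos y + α * Real.cos (β * y) + φ y = 0 → y = x :=
  stmt_2_general α β hα0 hα1 hβ hαβ φ φ' hφ hφ0 hφ'0
end

section
/- Suppose θ : [a,b] → ℝ is differentiable and satisfies θ'(x) = k cos(2θ(x)) on (a,b) for some constant k > 0, and set α = tanh(k(b−a)). Then sin(θ(b) − θ(a)) = α · cos(θ(b) + θ(a)). -/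
/-!
The defect `G x = sin (θ x - θ a) cosh (k (x - a)) - cos (θ x + θ a) sinh (k (x - a))` vanishes
at `a` and, by the addition formulas, satisfies the linear equation `G' = -k sin (2 θ) G`, whose
coefficient is bounded by `|k|`. Grönwall's inequality forces `G ≡ 0`, and `G b = 0` is the claim
after dividing by `cosh (k (b - a))`.
-/

open Set Real

noncomputable def tanhDefect (k a : ℝ) (θ : ℝ → ℝ) (x : ℝ) : ℝ :=
  sin (θ x - θ a) * cosh (k * (x - a)) - cos (θ x + θ a) * sinh (k * (x - a))

theorem hasDerivAt_tanhDefect {k a x : ℝ} {θ : ℝ → ℝ}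
    (hθ : HasDerivAt θ (k * cos (2 * θ x)) x) :
    HasDerivAt (tanhDefect k a θ) (-(k * sin (2 * θ x)) * tanhDefect k a θ x) x := by
  have hlin : HasDerivAt (fun y => k * (y - a)) k x := by
    simpa using ((hasDerivAt_id x).sub_const a).const_mul k
  refine (((hθ.sub_const (θ a)).sin.mul hlin.cosh).sub
    ((hθ.add_const (θ a)).cos.mul hlin.sinh)).congr_deriv ?_
  have hsplit : 2 * θ x = (θ x - θ a) + (θ x + θ a) := by ring
  rw [hsplit, cos_add (θ x - θ a), sin_add (θ x - θ a), tanhDefect]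
  linear_combination k * cosh (k * (x - a)) * cos (θ x + θ a) * sin_sq_add_cos_sq (θ x - θ a)
    - k * sinh (k * (x - a)) * sin (θ x - θ a) * sin_sq_add_cos_sq (θ x + θ a)

theorem tanhDefect_eq_zero {k a b : ℝ} {θ : ℝ → ℝ}
    (hθ : ∀ x ∈ Icc a b, HasDerivAt θ (k * cos (2 * θ x)) x) :
    ∀ x ∈ Icc a b, tanhDefect k a θ x = 0 := by
  have hG : ∀ x ∈ Icc a b, HasDerivAt (tanhDefect k a θ)
      (-(k * sin (2 * θ x)) * tanhDefect k a θ x) x :=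
    fun x hx => hasDerivAt_tanhDefect (hθ x hx)
  refine eq_zero_of_abs_deriv_le_mul_abs_self_of_eq_zero_right (K := |k|)
    (fun x hx => (hG x hx).continuousAt.continuousWithinAt)
    (fun x hx => (hG x (Ico_subset_Icc_self hx)).hasDerivWithinAt)
    (by simp [tanhDefect]) fun x _ => ?_
  rw [norm_mul, norm_neg, norm_mul, norm_eq_abs, norm_eq_abs]
  gcongr
  exact mul_le_of_le_one_right (abs_nonneg k) (abs_sin_le_one _)

theorem stmt_3_general (k a b : ℝ) (hab : a ≤ b) (θ : ℝ → ℝ)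
    (hθ : ∀ x ∈ Icc a b, HasDerivAt θ (k * Real.cos (2 * θ x)) x) :
    Real.sin (θ b - θ a) = Real.tanh (k * (b - a)) * Real.cos (θ b + θ a) := by
  have hG := tanhDefect_eq_zero hθ b (right_mem_Icc.2 hab)
  rw [tanhDefect, sub_eq_zero] at hG
  rw [tanh_eq_sinh_div_cosh, div_mul_eq_mul_div, eq_div_iff (cosh_pos _).ne']
  linarith

theorem stmt_3 (k a b : ℝ) (hk : 0 < k) (hab : a ≤ b) (θ : ℝ → ℝ)
    (hθ : ∀ x ∈ Icc a b, HasDerivAt θ (k * Real.cos (2 * θ x)) x) :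
    Real.sin (θ b - θ a) = Real.tanh (k * (b - a)) * Real.cos (θ b + θ a) :=
  stmt_3_general k a b hab θ hθ
end

section
/- Let β > 1 and 1/β < α < 1. Define ξ = arcsin(√(α²β²−1)/√(β²−1)) and η = arcsin(√(1−α²)/(α√(β²−1))), and ν(α,β) = (2/π)(βξ + η). Then for fixed β > 1, as α varies continuously and increasingly from 1/β to 1, ν(α,β) varies continuously and strictly monotonically from 1 to β; in particular 1 < ν(α,β) < β for α ∈ (1/β, 1). -/
open Set Real Filter Topology

/-! `ν` extends continuously to `[1/β, 1]`, with `ν(1/β) = 1` (there `ξ = 0`, `η = π/2`) and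
`ν(1) = β` (there `ξ = π/2`, `η = 0`). Inside, the derivatives of `βξ` and `η` combine to
`ν'(α) = (2/π) √(α²β² - 1) / (α √(1 - α²)) > 0`, so `ν` is strictly increasing on the closed
interval, and the limits and bounds follow from continuity and monotonicity. -/

lemma HasDerivAt.arcsin_of_sq_add_sq {f : ℝ → ℝ} {f' x c : ℝ} (hf : HasDerivAt f f' x)
    (hc : 0 < c) (hfc : f x ^ 2 + c ^ 2 = 1) :
    HasDerivAt (fun a => arcsin (f a)) (f' / c) x := by
  have hsqrt : √(1 - f x ^ 2) = c := by rw [← hfc, add_sub_cancel_left, sqrt_sq hc.le]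
  have h := (hasDerivAt_arcsin (by nlinarith) (by nlinarith)).comp x hf
  simpa [Function.comp_def, hsqrt, div_eq_inv_mul] using h

noncomputable def nu (β α : ℝ) : ℝ :=
  (2 / π) * (β * arcsin (√(α ^ 2 * β ^ 2 - 1) / √(β ^ 2 - 1))
    + arcsin (√(1 - α ^ 2) / (α * √(β ^ 2 - 1))))

section

variable {β x : ℝ}

lemma pos_of_mem_Ioo_one_div (hβ : 1 < β) (hx : x ∈ Ioo (1 / β) 1) :
    0 < x ∧ 0 < x ^ 2 * β ^ 2 - 1 ∧ 0 < 1 - x ^ 2 := by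
  have hβ0 : 0 < β := by linarith
  have hx0 : 0 < x := (one_div_pos.2 hβ0).trans hx.1
  have hxβ : 1 < x * β := by rw [← div_lt_iff₀ hβ0]; exact hx.1
  exact ⟨hx0, by nlinarith, by nlinarith [hx.2]⟩

lemma hasDerivAt_arcsin_xi (hβ : 1 < β) (hx : x ∈ Ioo (1 / β) 1) :
    HasDerivAt (fun a => arcsin (√(a ^ 2 * β ^ 2 - 1) / √(β ^ 2 - 1)))
      (x * β / (√(x ^ 2 * β ^ 2 - 1) * √(1 - x ^ 2))) x := by
  obtain ⟨-, h1, h2⟩ := pos_of_mem_Ioo_one_div hβ hx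
  have hb : 0 < β ^ 2 - 1 := by nlinarith
  have hs1 := sq_sqrt h1.le
  have hs2 := sq_sqrt h2.le
  have hs3 := sq_sqrt hb.le
  have hinner : HasDerivAt (fun a => √(a ^ 2 * β ^ 2 - 1) / √(β ^ 2 - 1))
      (2 * x * β ^ 2 / (2 * √(x ^ 2 * β ^ 2 - 1)) / √(β ^ 2 - 1)) x := by
    have hpoly : HasDerivAt (fun a => a ^ 2 * β ^ 2 - 1) (2 * x * β ^ 2) x := by
      simpa using ((hasDerivAt_pow 2 x).mul_const (β ^ 2)).sub_const 1
    exact (hpoly.sqrt h1.ne').div_const _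
  convert hinner.arcsin_of_sq_add_sq (c := β * √(1 - x ^ 2) / √(β ^ 2 - 1))
    (by positivity) (by rw [div_pow, div_pow, mul_pow, hs1, hs2, hs3]; field_simp; ring) using 1
  field_simp

lemma hasDerivAt_arcsin_eta (hβ : 1 < β) (hx : x ∈ Ioo (1 / β) 1) :
    HasDerivAt (fun a => arcsin (√(1 - a ^ 2) / (a * √(β ^ 2 - 1))))
      (-1 / (x * √(x ^ 2 * β ^ 2 - 1) * √(1 - x ^ 2))) x := by
  obtain ⟨hx0, h1, h2⟩ := pos_of_mem_Ioo_one_div hβ hx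
  have hb : 0 < β ^ 2 - 1 := by nlinarith
  have hs1 := sq_sqrt h1.le
  have hs2 := sq_sqrt h2.le
  have hs3 := sq_sqrt hb.le
  have hinner : HasDerivAt (fun a => √(1 - a ^ 2) / (a * √(β ^ 2 - 1)))
      ((-(2 * x) / (2 * √(1 - x ^ 2)) * (x * √(β ^ 2 - 1)) - √(1 - x ^ 2) * √(β ^ 2 - 1))
        / (x * √(β ^ 2 - 1)) ^ 2) x := by
    have hpoly : HasDerivAt (fun a => 1 - a ^ 2) (-(2 * x)) x := by
      simpa using (hasDerivAt_pow 2 x).const_sub 1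
    have hlin : HasDerivAt (fun a => a * √(β ^ 2 - 1)) √(β ^ 2 - 1) x := by
      simpa using (hasDerivAt_id x).mul_const √(β ^ 2 - 1)
    exact (hpoly.sqrt h2.ne').div hlin (by positivity)
  convert hinner.arcsin_of_sq_add_sq (c := √(x ^ 2 * β ^ 2 - 1) / (x * √(β ^ 2 - 1)))
    (by positivity) (by rw [div_pow, div_pow, mul_pow, hs1, hs2, hs3]; field_simp; ring) using 1
  field_simp
  linear_combination hs2

lemma hasDerivAt_nu (hβ : 1 < β) (hx : x ∈ Ioo (1 / β) 1) :
    HasDerivAt (nu β) (2 / π * (√(x ^ 2 * β ^ 2 - 1) / (x * √(1 - x ^ 2)))) x := by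
  obtain ⟨hx0, h1, h2⟩ := pos_of_mem_Ioo_one_div hβ hx
  refine ((((hasDerivAt_arcsin_xi hβ hx).const_mul β).add
    (hasDerivAt_arcsin_eta hβ hx)).const_mul (2 / π)).congr_deriv ?_
  have hs1 := sq_sqrt h1.le
  have hs1_pos := sqrt_pos.2 h1
  have hs2_pos := sqrt_pos.2 h2
  generalize √(x ^ 2 * β ^ 2 - 1) = s1 at *
  field_simp
  linear_combination -hs1

lemma continuousOn_nu (hβ : 1 < β) : ContinuousOn (nu β) (Icc (1 / β) 1) := by
  have hs : 0 < √(β ^ 2 - 1) := sqrt_pos.2 (by nlinarith)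
  have hden : ∀ α ∈ Icc (1 / β) 1, α * √(β ^ 2 - 1) ≠ 0 := fun α hα =>
    (mul_pos ((one_div_pos.2 (by linarith)).trans_le hα.1) hs).ne'
  unfold nu
  fun_prop (disch := first | exact hs.ne' | exact hden)

lemma strictMonoOn_nu (hβ : 1 < β) : StrictMonoOn (nu β) (Icc (1 / β) 1) := by
  refine strictMonoOn_of_deriv_pos (convex_Icc _ _) (continuousOn_nu hβ) fun x hx => ?_
  rw [interior_Icc] at hx
  obtain ⟨hx0, h1, h2⟩ := pos_of_mem_Ioo_one_div hβ hx
  rw [(hasDerivAt_nu hβ hx).deriv]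
  have hs1_pos := sqrt_pos.2 h1
  have hs2_pos := sqrt_pos.2 h2
  positivity

lemma nu_one_div (hβ : 1 < β) : nu β (1 / β) = 1 := by
  have hb : 0 < β ^ 2 - 1 := by nlinarith
  have h1 : (1 / β) ^ 2 * β ^ 2 - 1 = 0 := by field_simp; ring
  have h2 : 1 - (1 / β) ^ 2 = (1 / β * √(β ^ 2 - 1)) ^ 2 := by
    rw [mul_pow, sq_sqrt hb.le]; field_simp
  rw [nu, h1, sqrt_zero, zero_div, arcsin_zero, h2, sqrt_sq (by positivity),
    div_self (by positivity), arcsin_one]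
  field_simp; ring

lemma nu_one (hβ : 1 < β) : nu β 1 = β := by
  have hs : 0 < √(β ^ 2 - 1) := sqrt_pos.2 (by nlinarith)
  rw [nu, one_pow, one_mul, div_self hs.ne', arcsin_one, sub_self, sqrt_zero, zero_div,
    arcsin_zero, add_zero]
  field_simp

end

theorem stmt_5 (β : ℝ) (hβ : 1 < β)
    (ν : ℝ → ℝ)
    (hν : ∀ α, ν α = (2 / π) * (β * Real.arcsin (Real.sqrt (α ^ 2 * β ^ 2 - 1) / Real.sqrt (β ^ 2 - 1))
      + Real.arcsin (Real.sqrt (1 - α ^ 2) / (α * Real.sqrt (β ^ 2 - 1))))) :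
    ContinuousOn ν (Ioo (1 / β) 1) ∧
    StrictMonoOn ν (Ioo (1 / β) 1) ∧
    Tendsto ν (𝓝[>] (1 / β)) (𝓝 1) ∧
    Tendsto ν (𝓝[<] 1) (𝓝 β) ∧
    ∀ α ∈ Ioo (1 / β) 1, 1 < ν α ∧ ν α < β := by
  obtain rfl : ν = nu β := funext hν
  have hlt : 1 / β < 1 := (div_lt_one (by linarith)).2 hβ
  have hleft : 1 / β ∈ Icc (1 / β) 1 := left_mem_Icc.2 hlt.le
  have hright : (1 : ℝ) ∈ Icc (1 / β) 1 := right_mem_Icc.2 hlt.le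
  have hcont := continuousOn_nu hβ
  have hmono := strictMonoOn_nu hβ
  refine ⟨hcont.mono Ioo_subset_Icc_self, hmono.mono Ioo_subset_Icc_self, ?_, ?_,
    fun α hα => ?_⟩
  · have h := ((hcont _ hleft).mono Ioo_subset_Icc_self).tendsto
    rwa [nhdsWithin_Ioo_eq_nhdsGT hlt, nu_one_div hβ] at h
  · have h := ((hcont _ hright).mono Ioo_subset_Icc_self).tendsto
    rwa [nhdsWithin_Ioo_eq_nhdsLT hlt, nu_one hβ] at h
  · exact ⟨(nu_one_div hβ).symm.trans_lt (hmono hleft (Ioo_subset_Icc_self hα) hα.1),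
      (hmono (Ioo_subset_Icc_self hα) hright hα.2).trans_eq (nu_one hβ)⟩
end

section
/- Let α, β > 0 with αβ > 1 and α < 1. If x ∈ ℝ satisfies cos(x) + α cos(βx) = 0 and sin(x) + αβ sin(βx) = 0, then sin²(x) = β²(1−α²)/(β²−1) and sin²(βx) = (1−α²)/(α²(β²−1)). -/
/-! Write `cos x = c cos y` and `sin x = s sin y`. Adding the squares and using the Pythagorean
identity for `x` and for `y` gives the linear equation `c² + (s² - c²) sin² y = 1` for `sin² y`,
and then `sin² x = s² sin² y`. -/

open Real

theorem sin_sq_mul_sub_eq_of_cos_eq_of_sin_eq {x y c s : ℝ} (hcos : cos x = c * cos y)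
    (hsin : sin x = s * sin y) : sin y ^ 2 * (s ^ 2 - c ^ 2) = 1 - c ^ 2 := by
  have hx := sin_sq_add_cos_sq x
  have hy := cos_sq_add_sin_sq y
  rw [hcos, hsin] at hx
  linear_combination hx - c ^ 2 * hy

theorem stmt_6_general (α β x : ℝ) (hβ0 : 0 < β) (hαβ : 1 < α * β) (hα1 : α < 1)
    (h0 : Real.cos x + α * Real.cos (β * x) = 0)
    (h1 : Real.sin x + α * β * Real.sin (β * x) = 0) :
    Real.sin x ^ 2 = β ^ 2 * (1 - α ^ 2) / (β ^ 2 - 1) ∧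
    Real.sin (β * x) ^ 2 = (1 - α ^ 2) / (α ^ 2 * (β ^ 2 - 1)) := by
  have hβ1 : 1 < β := by nlinarith
  have hα : α ≠ 0 := by rintro rfl; simp at hαβ; linarith
  have hβ : β ^ 2 - 1 ≠ 0 := by nlinarith
  have hsin : sin x = -(α * β) * sin (β * x) := by linear_combination h1
  have key := sin_sq_mul_sub_eq_of_cos_eq_of_sin_eq (c := -α) (by linear_combination h0) hsin
  have hsin_sq : sin (β * x) ^ 2 * (α ^ 2 * (β ^ 2 - 1)) = 1 - α ^ 2 := by
    linear_combination key
  constructor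
  · rw [eq_div_iff hβ, hsin]
    linear_combination β ^ 2 * hsin_sq
  · rw [eq_div_iff (by positivity)]
    exact hsin_sq

theorem stmt_6 (α β x : ℝ) (hα0 : 0 < α) (hβ0 : 0 < β) (hαβ : 1 < α * β) (hα1 : α < 1)
    (h0 : Real.cos x + α * Real.cos (β * x) = 0)
    (h1 : Real.sin x + α * β * Real.sin (β * x) = 0) :
    Real.sin x ^ 2 = β ^ 2 * (1 - α ^ 2) / (β ^ 2 - 1) ∧
    Real.sin (β * x) ^ 2 = (1 - α ^ 2) / (α ^ 2 * (β ^ 2 - 1)) :=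
  stmt_6_general α β x hβ0 hαβ hα1 h0 h1
end

section
/- Let α ∈ (0,1) and β > 1 with αβ > 1, and set f(x) = cos(x) + α cos(βx). There exist positive constants c₀ and c₁, depending only on α and β, such that for all x ∈ ℝ: |f''(x)| ≥ c₀ − c₁·√(f(x)² + f'(x)²). -/
/-!
Write `f = cos x + α cos (βx)`. Since `f'' + f = α (1 - β²) cos (βx)`, the second derivative can
only be small where `f` is small if `cos (βx)` is small too. But then `|sin (βx)|` is close to `1`,
and `f' = -sin x - αβ sin (βx)` with `αβ > 1` cannot be small, because `sin x` is too weak to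
cancel `αβ sin (βx)`.
-/

open Real

lemma one_sub_abs_cos_le_abs_sin (θ : ℝ) : 1 - |cos θ| ≤ |sin θ| := by
  nlinarith [sin_sq_add_cos_sq θ, sq_abs (sin θ), sq_abs (cos θ), abs_sin_le_one θ,
    abs_nonneg (sin θ), abs_nonneg (cos θ)]

section

variable (α β x : ℝ)

lemma abs_mul_cos_mul_le :
    |α * (β ^ 2 - 1) * cos (β * x)|
      ≤ |-cos x - α * β ^ 2 * cos (β * x)| + |cos x + α * cos (β * x)| := by
  calc |α * (β ^ 2 - 1) * cos (β * x)|
      = |-((-cos x - α * β ^ 2 * cos (β * x)) + (cos x + α * cos (β * x)))| := by ring_nf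
    _ ≤ _ := by rw [abs_neg]; exact abs_add_le _ _

lemma abs_mul_sin_mul_le :
    |α * β * sin (β * x)| ≤ |-sin x - α * β * sin (β * x)| + 1 := by
  calc |α * β * sin (β * x)|
      = |-(-sin x - α * β * sin (β * x)) - sin x| := by ring_nf
    _ ≤ |-(-sin x - α * β * sin (β * x))| + |sin x| := abs_sub _ _
    _ ≤ _ := by rw [abs_neg]; linarith [abs_sin_le_one x]

lemma sub_le_abs_second_deriv {β : ℝ} (hβ : 1 ≤ β) :
    (β ^ 2 - 1) * (|α| * β - 1)
        - (β ^ 2 - 1) * |-sin x - α * β * sin (β * x)| - β * |cos x + α * cos (β * x)|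
      ≤ β * |-cos x - α * β ^ 2 * cos (β * x)| := by
  have hβ2 : 0 ≤ β ^ 2 - 1 := by nlinarith
  have hcos := abs_mul_cos_mul_le α β x
  have hsin := abs_mul_sin_mul_le α β x
  rw [abs_mul, abs_mul, abs_of_nonneg hβ2] at hcos
  rw [abs_mul, abs_mul, abs_of_nonneg (by linarith : (0 : ℝ) ≤ β)] at hsin
  have hαβ_cos : |α| * β - 1 - |-sin x - α * β * sin (β * x)| ≤ |α| * β * |cos (β * x)| := by
    nlinarith [mul_le_mul_of_nonneg_left (one_sub_abs_cos_le_abs_sin (β * x))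
      (mul_nonneg (abs_nonneg α) (by linarith : (0 : ℝ) ≤ β))]
  nlinarith [mul_le_mul_of_nonneg_left hcos (by linarith : (0 : ℝ) ≤ β),
    mul_le_mul_of_nonneg_left hαβ_cos hβ2]

end

theorem stmt_7_general (α β : ℝ) (hβ : 1 < β) (hαβ : 1 < α * β) :
    ∃ c₀ c₁ : ℝ, 0 < c₀ ∧ 0 < c₁ ∧ ∀ x : ℝ,
      c₀ - c₁ * Real.sqrt ((Real.cos x + α * Real.cos (β * x)) ^ 2
        + (-Real.sin x - α * β * Real.sin (β * x)) ^ 2)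
      ≤ |(-Real.cos x - α * β ^ 2 * Real.cos (β * x))| := by
  have hβ0 : 0 < β := by linarith
  have hβ2 : 0 < β ^ 2 - 1 := by nlinarith
  have hαβ' : 1 < |α| * β := hαβ.trans_le (mul_le_mul_of_nonneg_right (le_abs_self α) hβ0.le)
  refine ⟨(β ^ 2 - 1) * (|α| * β - 1) / β, β + 1, by positivity, by positivity, fun x => ?_⟩
  set E := √((cos x + α * cos (β * x)) ^ 2 + (-sin x - α * β * sin (β * x)) ^ 2)
  have hf : |cos x + α * cos (β * x)| ≤ E := abs_le_sqrt (by nlinarith)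
  have hf' : |-sin x - α * β * sin (β * x)| ≤ E := abs_le_sqrt (by nlinarith)
  have hE : 0 ≤ E := sqrt_nonneg _
  have key := sub_le_abs_second_deriv α x hβ.le
  rw [← mul_le_mul_iff_of_pos_left hβ0, mul_sub, mul_div_cancel₀ _ hβ0.ne']
  nlinarith [mul_le_mul_of_nonneg_left hf hβ0.le, mul_le_mul_of_nonneg_left hf' hβ2.le]

theorem stmt_7 (α β : ℝ) (hα0 : 0 < α) (hα1 : α < 1) (hβ : 1 < β) (hαβ : 1 < α * β) :
    ∃ c₀ c₁ : ℝ, 0 < c₀ ∧ 0 < c₁ ∧ ∀ x : ℝ,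
      c₀ - c₁ * Real.sqrt ((Real.cos x + α * Real.cos (β * x)) ^ 2
        + (-Real.sin x - α * β * Real.sin (β * x)) ^ 2)
      ≤ |(-Real.cos x - α * β ^ 2 * Real.cos (β * x))| :=
  stmt_7_general α β hβ hαβ
end

section
/- Let α ∈ (0,1), β > 1 with αβ > 1, f(x) = cos(x) + α cos(βx), and suppose κ > 0 satisfies: whenever f(x)² + f'(x)² ≤ κ², one has |f''(x)| ≥ κ. Then for any two distinct points s < t with f'(s) = f'(t) = 0, f(s)² + f'(s)² < κ², and f(t)² + f'(t)² < κ², we have t − s ≥ 2κ/(1 + αβ³). -/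
/-!
By Rolle's theorem `f''` vanishes at some `c ∈ (s, t)`. Since `|f'''| ≤ 1 + αβ³`, `f''` is
`(1 + αβ³)`-Lipschitz, so `κ ≤ |f'' s| ≤ (1 + αβ³)(c - s)` and `κ ≤ |f'' t| ≤ (1 + αβ³)(t - c)`;
adding the two gives `2κ ≤ (1 + αβ³)(t - s)`.
-/

open Real Set

theorem two_mul_le_mul_sub_of_deriv_lipschitz {g g' : ℝ → ℝ} {L κ s t : ℝ}
    (hg : ∀ x, HasDerivAt g (g' x) x) (hLip : ∀ x y, |g' x - g' y| ≤ L * |x - y|)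
    (hst : s < t) (hgst : g s = g t) (hs : κ ≤ |g' s|) (ht : κ ≤ |g' t|) :
    2 * κ ≤ L * (t - s) := by
  have hcont : ContinuousOn g (Icc s t) := fun x _ => (hg x).continuousAt.continuousWithinAt
  obtain ⟨c, ⟨hsc, hct⟩, hc⟩ := exists_hasDerivAt_eq_zero hst hcont hgst fun x _ => hg x
  have hs' : κ ≤ L * (c - s) := by
    have h := hLip s c
    rw [hc, sub_zero, abs_sub_comm, abs_of_pos (sub_pos.2 hsc)] at h
    exact hs.trans h
  have ht' : κ ≤ L * (t - c) := by
    have h := hLip t c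
    rw [hc, sub_zero, abs_of_pos (sub_pos.2 hct)] at h
    exact ht.trans h
  linarith

theorem hasDerivAt_sin_add_mul_sin (a β x : ℝ) :
    HasDerivAt (fun y => sin y + a * sin (β * y)) (cos x + a * β * cos (β * x)) x := by
  have hβ : HasDerivAt (fun y => sin (β * y)) (cos (β * x) * β) x :=
    (hasDerivAt_sin (β * x)).comp x ((hasDerivAt_id x).const_mul β |>.congr_deriv (mul_one β))
  exact ((hasDerivAt_sin x).add (hβ.const_mul a)).congr_deriv (by ring)

theorem abs_cos_add_mul_cos_sub_le (a β x y : ℝ) :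
    |(cos x + a * cos (β * x)) - (cos y + a * cos (β * y))| ≤ (1 + |a| * |β|) * |x - y| := by
  calc |(cos x + a * cos (β * x)) - (cos y + a * cos (β * y))|
      = |(cos x - cos y) + a * (cos (β * x) - cos (β * y))| := by ring_nf
    _ ≤ |cos x - cos y| + |a| * |cos (β * x) - cos (β * y)| := by
        rw [← abs_mul]; exact abs_add_le _ _
    _ ≤ |x - y| + |a| * (|β| * |x - y|) := by
        refine add_le_add (abs_cos_sub_cos_le _ _) (mul_le_mul_of_nonneg_left ?_ (abs_nonneg a))
        rw [← abs_mul, mul_sub]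
        exact abs_cos_sub_cos_le _ _
    _ = (1 + |a| * |β|) * |x - y| := by ring

theorem stmt_8_general (α β κ s t : ℝ) (hα0 : 0 < α) (hβ : 1 < β)
    (f f' f'' : ℝ → ℝ)
    (hf' : ∀ x, f' x = -Real.sin x - α * β * Real.sin (β * x))
    (hf'' : ∀ x, f'' x = -Real.cos x - α * β ^ 2 * Real.cos (β * x))
    (hκprop : ∀ x, f x ^ 2 + f' x ^ 2 ≤ κ ^ 2 → κ ≤ |f'' x|)
    (hst : s < t) (hfs : f' s = 0) (hft : f' t = 0)
    (hEs : f s ^ 2 + f' s ^ 2 < κ ^ 2) (hEt : f t ^ 2 + f' t ^ 2 < κ ^ 2) :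
    2 * κ / (1 + α * β ^ 3) ≤ t - s := by
  have hβ0 : 0 < β := by linarith
  have hderiv : ∀ x, HasDerivAt f' (f'' x) x := fun x => by
    have h := (hasDerivAt_sin_add_mul_sin (α * β) β x).fun_neg
    rw [show f' = fun y => -(sin y + α * β * sin (β * y)) from funext fun y => by rw [hf']; ring]
    exact h.congr_deriv (by rw [hf'']; ring)
  have hLip : ∀ x y, |f'' x - f'' y| ≤ (1 + α * β ^ 3) * |x - y| := fun x y => by
    have h := abs_cos_add_mul_cos_sub_le (α * β ^ 2) β x y
    rw [abs_of_pos (by positivity : 0 < α * β ^ 2), abs_of_pos hβ0] at h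
    rw [hf'', hf'', ← abs_neg]
    convert h using 2 <;> ring
  have hbound := two_mul_le_mul_sub_of_deriv_lipschitz hderiv hLip hst (hfs.trans hft.symm)
    (hκprop s hEs.le) (hκprop t hEt.le)
  rw [div_le_iff₀ (by positivity)]
  linarith

theorem stmt_8 (α β κ s t : ℝ) (hα0 : 0 < α) (hα1 : α < 1) (hβ : 1 < β) (hαβ : 1 < α * β)
    (hκ : 0 < κ)
    (f f' f'' : ℝ → ℝ)
    (hf : ∀ x, f x = Real.cos x + α * Real.cos (β * x))
    (hf' : ∀ x, f' x = -Real.sin x - α * β * Real.sin (β * x))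
    (hf'' : ∀ x, f'' x = -Real.cos x - α * β ^ 2 * Real.cos (β * x))
    (hκprop : ∀ x, f x ^ 2 + f' x ^ 2 ≤ κ ^ 2 → κ ≤ |f'' x|)
    (hst : s < t) (hfs : f' s = 0) (hft : f' t = 0)
    (hEs : f s ^ 2 + f' s ^ 2 < κ ^ 2) (hEt : f t ^ 2 + f' t ^ 2 < κ ^ 2) :
    2 * κ / (1 + α * β ^ 3) ≤ t - s :=
  stmt_8_general α β κ s t hα0 hβ f f' f'' hf' hf'' hκprop hst hfs hft hEs hEt
end

section
/- Let θ be a real-valued solution of θ'(x) = γV(x) + k cos(2θ(x)) on a closed interval J = [a₀, a₁], where V(x) ≥ ε > 0 on J and γε > k > 0, and suppose θ(a₁) ≤ θ(a₀) + π. Then |∫_{a₀}^{a₁} cos(2θ(x)) dx| ≤ 2/(γε − k) and |∫_{a₀}^{a₁} sin(2θ(x)) dx| ≤ 2/(γε − k). -/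
open Set Real MeasureTheory intervalIntegral

/-! Since `θ' ≥ γε - k > 0`, the substitution `u = θ x` bounds `(γε - k) ∫ |f (θ x)| dx` by
`∫ |f u| du` over `[θ a₀, θ a₁]`. For `f u = cos (2u)` or `sin (2u)` this is an interval of length
at most `π`, a period of the nonnegative function `|f|`, so the latter integral is at most
`∫₀^π |sin (2u)| du = 2`. -/

theorem Function.Periodic.intervalIntegral_le_of_le_add {g : ℝ → ℝ} {T b c : ℝ}
    (hg : Function.Periodic g T) (hg_cont : Continuous g) (hg_nonneg : 0 ≤ g) (hT : 0 ≤ T)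
    (hcb : c ≤ b + T) :
    ∫ u in b..c, g u ≤ ∫ u in 0..T, g u := by
  rcases le_or_gt b c with hbc | hcb'
  · calc ∫ u in b..c, g u ≤ ∫ u in b..b + T, g u :=
          integral_mono_interval le_rfl hbc hcb (.of_forall hg_nonneg)
            (hg_cont.intervalIntegrable _ _)
      _ = ∫ u in 0..T, g u := by simpa using hg.intervalIntegral_add_eq b 0
  · rw [integral_symm]
    linarith [integral_nonneg (μ := volume) hcb'.le fun u _ ↦ hg_nonneg u,
      integral_nonneg (μ := volume) hT fun u _ ↦ hg_nonneg u]

theorem integral_abs_sin_two_mul_zero_pi : ∫ u in (0 : ℝ)..π, |sin (2 * u)| = 2 := by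
  have hperiodic : Function.Periodic (fun u ↦ |sin (2 * u)|) (π / 2) := fun u ↦ by
    simp only [mul_add, mul_div_cancel₀ π two_ne_zero, sin_add_pi, abs_neg]
  have hhalf : ∫ u in (0 : ℝ)..π / 2, |sin (2 * u)| = 1 := by
    rw [integral_congr fun u hu ↦ abs_of_nonneg (sin_nonneg_of_nonneg_of_le_pi ?_ ?_)]
    · norm_num [integral_comp_mul_left (fun u ↦ sin u), mul_div_cancel₀ π two_ne_zero]
    all_goals rw [uIcc_of_le (by positivity)] at hu; linarith [hu.1, hu.2]
  have := hperiodic.intervalIntegral_add_zsmul_eq 2 0 fun _ _ ↦ by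
    apply Continuous.intervalIntegrable; fun_prop
  simpa [hhalf, zsmul_eq_mul, mul_div_cancel₀ π two_ne_zero] using this

theorem integral_abs_sin_two_mul_le {b c : ℝ} (hcb : c ≤ b + π) :
    ∫ u in b..c, |sin (2 * u)| ≤ 2 := by
  have hperiodic : Function.Periodic (fun u ↦ |sin (2 * u)|) π := fun u ↦ by
    simp only [mul_add, sin_add_two_pi]
  exact (hperiodic.intervalIntegral_le_of_le_add (by fun_prop) (fun _ ↦ abs_nonneg _) pi_pos.le
    hcb).trans_eq integral_abs_sin_two_mul_zero_pi

theorem integral_abs_cos_two_mul_le {b c : ℝ} (hcb : c ≤ b + π) :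
    ∫ u in b..c, |cos (2 * u)| ≤ 2 := by
  have hshift (u : ℝ) : |cos (2 * u)| = |sin (2 * (u + π / 4))| := by
    rw [← cos_sub_pi_div_two]; ring_nf
  simp only [hshift, integral_comp_add_right fun u ↦ |sin (2 * u)|]
  exact integral_abs_sin_two_mul_le (by linarith)

theorem mul_integral_comp_le_integral_of_le_deriv {f θ θ' : ℝ → ℝ} {a b c : ℝ} (hab : a ≤ b)
    (hf : Continuous f) (hf_nonneg : 0 ≤ f) (hθ : ∀ x ∈ Icc a b, HasDerivAt θ (θ' x) x)
    (hθ' : ∀ x ∈ Icc a b, c ≤ θ' x) :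
    c * ∫ x in a..b, f (θ x) ≤ ∫ u in θ a..θ b, f u := by
  have hF (x : ℝ) (hx : x ∈ Icc a b) :
      HasDerivAt (fun x ↦ ∫ u in θ a..θ x, f u) (f (θ x) * θ' x) x :=
    (hf.integral_hasStrictDerivAt (θ a) (θ x)).hasDerivAt.comp x (hθ x hx)
  have hθ_cont : ContinuousOn θ (Icc a b) :=
    fun x hx ↦ (hθ x hx).continuousAt.continuousWithinAt
  have := integral_le_sub_of_hasDeriv_right_of_le (φ := fun x ↦ c * f (θ x)) hab
    (fun x hx ↦ (hF x hx).continuousAt.continuousWithinAt)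
    (fun x hx ↦ (hF x (Ioo_subset_Icc_self hx)).hasDerivWithinAt)
    ((continuousOn_const.mul (hf.comp_continuousOn hθ_cont)).integrableOn_Icc)
    (fun x hx ↦ (mul_comm c _).trans_le
      (mul_le_mul_of_nonneg_left (hθ' x (Ioo_subset_Icc_self hx)) (hf_nonneg _)))
  simpa only [intervalIntegral.integral_const_mul, integral_same, sub_zero] using this

theorem abs_integral_comp_le_div {f θ θ' : ℝ → ℝ} {a b c M : ℝ} (hab : a ≤ b) (hc : 0 < c)
    (hf : Continuous f) (hθ : ∀ x ∈ Icc a b, HasDerivAt θ (θ' x) x)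
    (hθ' : ∀ x ∈ Icc a b, c ≤ θ' x) (hM : ∫ u in θ a..θ b, |f u| ≤ M) :
    |∫ x in a..b, f (θ x)| ≤ M / c := by
  rw [le_div_iff₀' hc]
  calc c * |∫ x in a..b, f (θ x)| ≤ c * ∫ x in a..b, |f (θ x)| := by
        gcongr; exact abs_integral_le_integral_abs hab
    _ ≤ ∫ u in θ a..θ b, |f u| :=
        mul_integral_comp_le_integral_of_le_deriv hab hf.abs (fun _ ↦ abs_nonneg _) hθ hθ'
    _ ≤ M := hM

theorem stmt_16 (k γ ε a₀ a₁ : ℝ) (hk : 0 < k) (hε : 0 < ε) (hγε : k < γ * ε)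
    (ha : a₀ ≤ a₁) (V θ : ℝ → ℝ)
    (hV : ∀ x ∈ Icc a₀ a₁, ε ≤ V x)
    (hθ : ∀ x ∈ Icc a₀ a₁, HasDerivAt θ (γ * V x + k * Real.cos (2 * θ x)) x)
    (hend : θ a₁ ≤ θ a₀ + π) :
    |∫ x in a₀..a₁, Real.cos (2 * θ x)| ≤ 2 / (γ * ε - k) ∧
    |∫ x in a₀..a₁, Real.sin (2 * θ x)| ≤ 2 / (γ * ε - k) := by
  have hγ : 0 < γ := pos_of_mul_pos_left (hk.trans hγε) hε.le
  have hθ' (x : ℝ) (hx : x ∈ Icc a₀ a₁) : γ * ε - k ≤ γ * V x + k * cos (2 * θ x) := by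
    nlinarith [hV x hx, neg_one_le_cos (2 * θ x)]
  exact ⟨abs_integral_comp_le_div (f := fun u ↦ cos (2 * u)) ha (by linarith) (by fun_prop) hθ hθ'
      (integral_abs_cos_two_mul_le hend),
    abs_integral_comp_le_div (f := fun u ↦ sin (2 * u)) ha (by linarith) (by fun_prop) hθ hθ'
      (integral_abs_sin_two_mul_le hend)⟩
end

section
/- Let k > 0, γ ∈ ℝ, and V ∈ L¹(ℝ). Suppose θ solves θ'(x) = γV(x) + k cos(2θ(x)) on ℝ with lim_{x→+∞} θ(x) = −π/4. Then for every x ∈ ℝ, |θ(x) + π/4| ≤ h(|γ| ∫ₓ^∞ |V(t)| dt), where h(a) = a + (π/2)⌊2a/π⌋. -/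
/-!
Put `φ = θ + π/4`, so that `φ' = γV + k sin 2φ` and `φ → 0` at `+∞`. Where `sin 2φ > 0` the drift
pushes `φ` upwards, so on its way from `φ x` down to `0` the solution can only cross the part of
`[0, φ x]` where `sin 2u > 0` by spending the budget `A = |γ| ∫ₓ^∞ |V|`: if `G' = 1_{sin 2u > 0}`,
then `(G ∘ φ)' ≥ -|γ V|`, whence `G (φ x) ≤ A`. That part of `[0, s]` has length `> A` as soon as
`s > h A`. Applying the same bound to `-φ`, which solves the equation with `-γ`, gives the lower bound.
The indicator is not continuous, so `G` is reached as a limit of primitives of continuous ramps.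
-/

open Set Real Filter MeasureTheory Topology intervalIntegral
open scoped Interval

theorem integral_le_integral_Ioi_abs_of_hasDerivAt {φ w f g : ℝ → ℝ} {c : ℝ}
    (hw : Integrable w) (hg : Continuous g) (hg_abs : ∀ u, |g u| ≤ 1)
    (hgf : ∀ u, 0 ≤ g u * f u) (hφ : ∀ y, HasDerivAt φ (w y + f (φ y)) y)
    (hlim : Tendsto φ atTop (𝓝 c)) (x : ℝ) :
    ∫ u in c..φ x, g u ≤ ∫ t in Ioi x, |w t| := by
  set G : ℝ → ℝ := fun v => ∫ u in c..v, g u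
  have hG : ∀ v, HasDerivAt G (g v) v := fun v => (hg.integral_hasStrictDerivAt c v).hasDerivAt
  have hGφ : ∀ y, HasDerivAt (G ∘ φ) (g (φ y) * (w y + f (φ y))) y :=
    fun y => (hG (φ y)).comp y (hφ y)
  have hdecay : ∀ y, x ≤ y → G (φ x) - ∫ t in Ioi x, |w t| ≤ G (φ y) := by
    intro y hxy
    have hstep : ∫ t in x..y, -|w t| ≤ G (φ y) - G (φ x) := by
      refine integral_le_sub_of_hasDeriv_right_of_le hxy
        (fun t _ => (hGφ t).continuousAt.continuousWithinAt)
        (fun t _ => (hGφ t).hasDerivWithinAt) hw.abs.neg.integrableOn fun t _ => ?_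
      calc -|w t| ≤ g (φ t) * w t := by
            refine neg_le_of_abs_le ?_
            rw [abs_mul]
            exact mul_le_of_le_one_left (abs_nonneg _) (hg_abs _)
        _ ≤ g (φ t) * w t + g (φ t) * f (φ t) := le_add_of_nonneg_right (hgf _)
        _ = g (φ t) * (w t + f (φ t)) := (mul_add _ _ _).symm
    have hsub : ∫ t in x..y, |w t| ≤ ∫ t in Ioi x, |w t| := by
      rw [integral_of_le hxy]
      exact setIntegral_mono_set hw.abs.integrableOn (.of_forall fun t => abs_nonneg _)
        Ioc_subset_Ioi_self.eventuallyLE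
    rw [intervalIntegral.integral_neg] at hstep
    linarith
  have hGlim : Tendsto (G ∘ φ) atTop (𝓝 (G c)) :=
    ((hG c).continuousAt.tendsto).comp hlim
  have hfinal := ge_of_tendsto hGlim (eventually_atTop.2 ⟨x, hdecay⟩)
  simp only [G, integral_same] at hfinal
  linarith

def sinTwoPos : Set ℝ := {t | 0 < sin (2 * t)}

noncomputable def sinTwoPosLength (s : ℝ) : ℝ := ∫ t in 0..s, sinTwoPos.indicator 1 t

lemma measurableSet_sinTwoPos : MeasurableSet sinTwoPos :=
  measurableSet_lt measurable_const (by fun_prop)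

lemma intervalIntegrable_indicator_sinTwoPos (a b : ℝ) :
    IntervalIntegrable (sinTwoPos.indicator (1 : ℝ → ℝ)) volume a b :=
  intervalIntegrable_iff.2
    ((intervalIntegrable_iff.1 intervalIntegrable_const).indicator measurableSet_sinTwoPos)

lemma periodic_indicator_sinTwoPos : Function.Periodic (sinTwoPos.indicator (1 : ℝ → ℝ)) π := by
  intro t
  simp only [Set.indicator_apply, sinTwoPos, mem_ofPred_eq, mul_add, sin_add_two_pi, Pi.one_apply]

lemma sinTwoPosLength_monotone : Monotone sinTwoPosLength := fun a b hab => by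
  have hsplit := integral_add_adjacent_intervals (intervalIntegrable_indicator_sinTwoPos 0 a)
    (intervalIntegrable_indicator_sinTwoPos a b)
  have : 0 ≤ ∫ t in a..b, sinTwoPos.indicator (1 : ℝ → ℝ) t :=
    integral_nonneg hab fun t _ => Set.indicator_nonneg (fun _ _ => zero_le_one) t
  unfold sinTwoPosLength
  linarith

lemma sinTwoPosLength_of_mem_Icc {r : ℝ} (hr : r ∈ Icc 0 (π / 2)) : sinTwoPosLength r = r := by
  have : ∀ᵐ t, t ∈ Ι 0 r → sinTwoPos.indicator 1 t = (1 : ℝ) := by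
    filter_upwards [Measure.ae_ne volume (π / 2)] with t hne ht
    rw [uIoc_of_le hr.1] at ht
    have hlt : t < π / 2 := lt_of_le_of_ne (ht.2.trans hr.2) hne
    exact Set.indicator_of_mem (sin_pos_of_pos_of_lt_pi (x := 2 * t) (by linarith [ht.1])
      (by linarith)) (1 : ℝ → ℝ)
  rw [sinTwoPosLength, integral_congr_ae this]
  simp

lemma sinTwoPosLength_pi : sinTwoPosLength π = π / 2 := by
  have hzero : EqOn (sinTwoPos.indicator (1 : ℝ → ℝ)) 0 (uIcc (π / 2) π) := by
    intro t ht
    rw [uIcc_of_le (by linarith [pi_pos])] at ht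
    refine Set.indicator_of_notMem (fun (h : 0 < sin (2 * t)) => ?_) (1 : ℝ → ℝ)
    have := sin_nonpos_of_nonpos_of_neg_pi_le (x := 2 * t - 2 * π) (by linarith [ht.2])
      (by linarith [ht.1])
    rw [sin_sub_two_pi] at this
    linarith
  rw [sinTwoPosLength, ← integral_add_adjacent_intervals
    (intervalIntegrable_indicator_sinTwoPos _ _) (intervalIntegrable_indicator_sinTwoPos (π / 2) π),
    integral_congr hzero, ← sinTwoPosLength, sinTwoPosLength_of_mem_Icc ⟨by positivity, le_rfl⟩]
  simp

lemma sinTwoPosLength_add_pi (s : ℝ) : sinTwoPosLength (s + π) = sinTwoPosLength s + π / 2 := by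
  rw [← sinTwoPosLength_pi, sinTwoPosLength, sinTwoPosLength, sinTwoPosLength,
    periodic_indicator_sinTwoPos.intervalIntegral_add_eq_add 0 s
    intervalIntegrable_indicator_sinTwoPos, zero_add]

lemma sinTwoPosLength_nat_mul_pi_add (m : ℕ) {r : ℝ} (hr : r ∈ Icc 0 (π / 2)) :
    sinTwoPosLength (m * π + r) = m * (π / 2) + r := by
  induction m with
  | zero => simpa using sinTwoPosLength_of_mem_Icc hr
  | succ m ih =>
    rw [Nat.cast_succ, add_mul, one_mul, add_right_comm, sinTwoPosLength_add_pi, ih]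
    ring

lemma le_of_sinTwoPosLength_le {A s : ℝ} (hA : 0 ≤ A) (hs : sinTwoPosLength s ≤ A) :
    s ≤ A + π / 2 * ⌊2 * A / π⌋ := by
  set m := ⌊2 * A / π⌋₊
  have hm : m * (π / 2) ≤ A ∧ A < (m + 1) * (π / 2) := by
    have h1 := Nat.floor_le (a := 2 * A / π) (by positivity)
    have h2 := Nat.lt_floor_add_one (2 * A / π)
    rw [le_div_iff₀ pi_pos] at h1
    rw [div_lt_iff₀ pi_pos] at h2
    constructor <;> linarith
  rw [← natCast_floor_eq_intCast_floor (by positivity)]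
  by_contra! hlt
  have hr : min (s - m * π) (π / 2) ∈ Icc 0 (π / 2) :=
    ⟨le_min (by linarith) (by linarith [pi_pos]), min_le_right _ _⟩
  have := sinTwoPosLength_monotone (add_le_of_le_sub_left (min_le_left (s - m * π) (π / 2)))
  rw [sinTwoPosLength_nat_mul_pi_add m hr] at this
  rcases min_choice (s - m * π) (π / 2) with h | h <;> rw [h] at this <;> linarith

noncomputable def sinRamp (σ t : ℝ) : ℝ := max 0 (min 1 (sin (2 * t) / σ))

lemma continuous_sinRamp (σ : ℝ) : Continuous (sinRamp σ) := by
  unfold sinRamp; fun_prop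

lemma abs_sinRamp_le_one (σ t : ℝ) : |sinRamp σ t| ≤ 1 := by
  rw [abs_of_nonneg (le_max_left _ _)]
  exact max_le zero_le_one (min_le_left _ _)

lemma sinRamp_of_sin_nonpos {σ t : ℝ} (hσ : 0 ≤ σ) (ht : sin (2 * t) ≤ 0) : sinRamp σ t = 0 :=
  max_eq_left ((min_le_right _ _).trans (div_nonpos_of_nonpos_of_nonneg ht hσ))

lemma sinRamp_mul_sin_nonneg {σ : ℝ} (hσ : 0 ≤ σ) (t : ℝ) : 0 ≤ sinRamp σ t * sin (2 * t) := by
  rcases le_total (sin (2 * t)) 0 with h | h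
  · rw [sinRamp_of_sin_nonpos hσ h, zero_mul]
  · exact mul_nonneg (le_max_left _ _) h

lemma tendsto_sinRamp (t : ℝ) :
    Tendsto (fun σ => sinRamp σ t) (𝓝[>] 0) (𝓝 (sinTwoPos.indicator 1 t)) := by
  by_cases ht : 0 < sin (2 * t)
  · rw [Set.indicator_of_mem (show t ∈ sinTwoPos from ht)]
    refine tendsto_const_nhds.congr' ?_
    filter_upwards [Ioo_mem_nhdsGT ht] with σ hσ
    rw [sinRamp, min_eq_left ((one_le_div hσ.1).2 hσ.2.le), max_eq_right zero_le_one, Pi.one_apply]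
  · rw [Set.indicator_of_notMem (show t ∉ sinTwoPos from ht)]
    refine tendsto_const_nhds.congr' ?_
    filter_upwards [self_mem_nhdsWithin] with σ (hσ : 0 < σ)
    exact (sinRamp_of_sin_nonpos hσ.le (not_lt.1 ht)).symm

lemma tendsto_integral_sinRamp (s : ℝ) :
    Tendsto (fun σ => ∫ t in 0..s, sinRamp σ t) (𝓝[>] 0) (𝓝 (sinTwoPosLength s)) :=
  tendsto_integral_filter_of_dominated_convergence (fun _ => 1)
    (.of_forall fun σ => (continuous_sinRamp σ).aestronglyMeasurable)
    (.of_forall fun σ => .of_forall fun t _ => abs_sinRamp_le_one σ t)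
    intervalIntegrable_const (.of_forall fun t _ => tendsto_sinRamp t)

lemma sinTwoPosLength_le_integral_Ioi_abs {k : ℝ} (hk : 0 ≤ k) {φ w : ℝ → ℝ} (hw : Integrable w)
    (hφ : ∀ y, HasDerivAt φ (w y + k * sin (2 * φ y)) y) (hlim : Tendsto φ atTop (𝓝 0))
    (x : ℝ) : sinTwoPosLength (φ x) ≤ ∫ t in Ioi x, |w t| :=
  le_of_tendsto (tendsto_integral_sinRamp (φ x)) <|
    eventually_mem_nhdsWithin.mono fun σ (hσ : 0 < σ) =>
      integral_le_integral_Ioi_abs_of_hasDerivAt (f := fun u => k * sin (2 * u)) hw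
        (continuous_sinRamp σ) (abs_sinRamp_le_one σ)
        (fun u => by simpa only [mul_left_comm] using mul_nonneg hk (sinRamp_mul_sin_nonneg hσ.le u))
        hφ hlim x

lemma le_of_hasDerivAt_eq_add_mul_sin {k : ℝ} (hk : 0 ≤ k) {φ w : ℝ → ℝ} (hw : Integrable w)
    (hφ : ∀ y, HasDerivAt φ (w y + k * sin (2 * φ y)) y) (hlim : Tendsto φ atTop (𝓝 0))
    (x : ℝ) :
    φ x ≤ (∫ t in Ioi x, |w t|) + π / 2 * ⌊2 * (∫ t in Ioi x, |w t|) / π⌋ :=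
  le_of_sinTwoPosLength_le (integral_nonneg fun _ => abs_nonneg _)
    (sinTwoPosLength_le_integral_Ioi_abs hk hw hφ hlim x)

theorem stmt_17 (k γ : ℝ) (hk : 0 < k) (V θ : ℝ → ℝ)
    (hV : Integrable V)
    (hθ : ∀ x, HasDerivAt θ (γ * V x + k * Real.cos (2 * θ x)) x)
    (hlim : Tendsto θ atTop (nhds (-(π / 4)))) :
    ∀ x : ℝ, |θ x + π / 4| ≤
      (fun a : ℝ => a + (π / 2) * ⌊2 * a / π⌋) (|γ| * ∫ t in Ioi x, |V t|) := by
  intro x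
  set φ : ℝ → ℝ := fun y => θ y + π / 4
  have hφ : ∀ y, HasDerivAt φ (γ * V y + k * sin (2 * φ y)) y := fun y => by
    rw [show 2 * φ y = 2 * θ y + π / 2 by ring, sin_add_pi_div_two]
    exact (hθ y).add_const _
  have hφ_neg : ∀ y, HasDerivAt (-φ) (-(γ * V y) + k * sin (2 * (-φ) y)) y := fun y => by
    rw [Pi.neg_apply, mul_neg, sin_neg]
    exact (hφ y).neg.congr_deriv (by ring)
  have hφ_lim : Tendsto φ atTop (𝓝 0) := by
    simpa using hlim.add_const (π / 4)
  have hA : ∫ t in Ioi x, |γ * V t| = |γ| * ∫ t in Ioi x, |V t| := by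
    simp only [abs_mul]
    exact integral_const_mul _ _
  have upper := le_of_hasDerivAt_eq_add_mul_sin hk.le (hV.const_mul γ) hφ hφ_lim x
  have lower := le_of_hasDerivAt_eq_add_mul_sin hk.le (hV.const_mul γ).neg hφ_neg
    (by simpa using hφ_lim.neg : Tendsto (fun y => -φ y) atTop (𝓝 0)) x
  simp only [Pi.neg_apply, abs_neg, hA] at upper lower
  exact abs_le.2 ⟨neg_le.1 lower, upper⟩
end
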